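/- arXiv:1701.09056 — 2 statements merged into one kernel-verified Lean document; each statement's English description precedes it below -/
import Mathlib

section
/- Let (M,g) be a smooth compact connected Riemannian manifold of dimension n ≥ 3 with boundary, and let c₁, c₂ be smooth positive functions on M with c := c₂/c₁ satisfying Δ_{c₁⁴ g} c^{n-2} + λ(c^{n-2} - c^{n+2}) = 0 on M. Then V_{g,c₁,λ} = V_{g,c₂,λ}, where V_{g,c,λ} := c^{-(n-2)} Δ_g(c^{n-2}) + λ(1 - c⁴). -/
open scoped BigOperators
open Matrix

/-- Partial derivative in the `i`-th coordinate direction. -/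
noncomputable def pd {n : ℕ} (i : Fin n) (f : (Fin n → ℝ) → ℝ) (x : Fin n → ℝ) : ℝ :=
  fderiv ℝ f x (Pi.single i 1)

/-- The Laplace–Beltrami operator of a Riemannian metric `g` in coordinates. -/
noncomputable def lapBel {n : ℕ} (g : (Fin n → ℝ) → Matrix (Fin n) (Fin n) ℝ)
    (u : (Fin n → ℝ) → ℝ) (x : Fin n → ℝ) : ℝ :=
  (Real.sqrt (g x).det)⁻¹ *
    ∑ i, pd i (fun y => Real.sqrt (g y).det * ∑ j, (g y)⁻¹ i j * pd j u y) x

/-- The potential `V_{g,c,λ} = c^{-(n-2)} Δ_g (c^{n-2}) + λ(1 - c⁴)`. -/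
noncomputable def Vpot {n : ℕ} (g : (Fin n → ℝ) → Matrix (Fin n) (Fin n) ℝ)
    (lam : ℝ) (c : (Fin n → ℝ) → ℝ) (x : Fin n → ℝ) : ℝ :=
  (c x) ^ (-((n : ℤ) - 2)) * lapBel g (fun y => (c y) ^ (n - 2)) x + lam * (1 - (c x) ^ 4)


lemma pd_mul {n : ℕ} {f g : (Fin n → ℝ) → ℝ} {x : Fin n → ℝ}
    (hf : DifferentiableAt ℝ f x) (hg : DifferentiableAt ℝ g x) (i : Fin n) :
    pd i (fun y => f y * g y) x = pd i f x * g x + f x * pd i g x := by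
  unfold pd
  rw [fderiv_fun_mul hf hg]
  simp only [ContinuousLinearMap.add_apply, ContinuousLinearMap.smul_apply, smul_eq_mul]
  ring

lemma pd_sub {n : ℕ} {f g : (Fin n → ℝ) → ℝ} {x : Fin n → ℝ}
    (hf : DifferentiableAt ℝ f x) (hg : DifferentiableAt ℝ g x) (i : Fin n) :
    pd i (fun y => f y - g y) x = pd i f x - pd i g x := by
  unfold pd
  rw [fderiv_fun_sub hf hg]
  simp

lemma contDiff_pd {n : ℕ} (j : Fin n) {w : (Fin n → ℝ) → ℝ} (hw : ContDiff ℝ (⊤ : ℕ∞) w) :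
    ContDiff ℝ (⊤ : ℕ∞) fun y => pd j w y :=
  (hw.fderiv_right (by simp)).clm_apply contDiff_const

lemma contDiff_matrix_det {n m : ℕ} (A : (Fin n → ℝ) → Matrix (Fin m) (Fin m) ℝ)
    (hA : ∀ i j, ContDiff ℝ (⊤ : ℕ∞) fun x => A x i j) : ContDiff ℝ (⊤ : ℕ∞) fun x => (A x).det := by
  simp only [Matrix.det_apply]
  refine ContDiff.sum fun σ _ => ?_
  have : (fun x => Equiv.Perm.sign σ • ∏ i, A x (σ i) i)
      = fun x => ((Equiv.Perm.sign σ : ℤ) : ℝ) * ∏ i, A x (σ i) i := by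
    funext x
    simp [Units.smul_def, zsmul_eq_mul]
  rw [this]
  exact contDiff_const.mul (contDiff_prod fun i _ => hA (σ i) i)

lemma contDiff_matrix_inv {n m : ℕ} (A : (Fin n → ℝ) → Matrix (Fin m) (Fin m) ℝ)
    (hA : ∀ i j, ContDiff ℝ (⊤ : ℕ∞) fun x => A x i j) (hdet : ∀ x, (A x).det ≠ 0)
    (i j : Fin m) : ContDiff ℝ (⊤ : ℕ∞) fun x => (A x)⁻¹ i j := by
  have h1 : (fun x => (A x)⁻¹ i j) = fun x => ((A x).det)⁻¹ * (A x).adjugate i j := by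
    funext x
    rw [Matrix.inv_def, Matrix.smul_apply, smul_eq_mul, Ring.inverse_eq_inv']
  rw [h1]
  refine ((contDiff_matrix_det A hA).inv hdet).mul ?_
  have h2 : (fun x => (A x).adjugate i j)
      = fun x => ((A x).updateRow j (Pi.single i 1)).det := by
    funext x; rw [Matrix.adjugate_apply]
  rw [h2]
  refine contDiff_matrix_det _ fun a b => ?_
  rcases eq_or_ne a j with rfl | hne
  · simp only [Matrix.updateRow_self]
    exact contDiff_const
  · simp only [Matrix.updateRow_apply, hne, if_false]
    exact hA a b

lemma inv_helper (P sq Q A B LA LB : ℝ) (hsq : sq ≠ 0) :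
    (P * sq)⁻¹ * ((Q + A * (sq * LB)) - (Q + B * (sq * LA)))
      = P⁻¹ * (A * LB - B * LA) := by
  rw [mul_inv]
  have h1 : (Q + A * (sq * LB)) - (Q + B * (sq * LA)) = sq * (A * LB - B * LA) := by ring
  rw [h1]
  have h2 : P⁻¹ * sq⁻¹ * (sq * (A * LB - B * LA))
      = P⁻¹ * ((sq⁻¹ * sq) * (A * LB - B * LA)) := by ring
  rw [h2, inv_mul_cancel₀ hsq, one_mul]

lemma lap_conf {N : ℕ} (g : (Fin (N+2) → ℝ) → Matrix (Fin (N+2)) (Fin (N+2)) ℝ)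
    (hgpd : ∀ x, (g x).PosDef) (hgsm : ∀ i j, ContDiff ℝ (⊤ : ℕ∞) fun x => g x i j)
    (c₁ c₂ : (Fin (N+2) → ℝ) → ℝ)
    (hc₁ : ContDiff ℝ (⊤ : ℕ∞) c₁) (hc₂ : ContDiff ℝ (⊤ : ℕ∞) c₂)
    (hc₁pos : ∀ x, 0 < c₁ x) (hc₂pos : ∀ x, 0 < c₂ x) (x : Fin (N+2) → ℝ) :
    lapBel (fun y => (c₁ y) ^ 4 • g y) (fun y => (c₂ y / c₁ y) ^ N) x
      = (c₁ x ^ (2*(N+2)))⁻¹ * (c₁ x ^ N * lapBel g (fun y => c₂ y ^ N) x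
          - c₂ x ^ N * lapBel g (fun y => c₁ y ^ N) x) := by
  have hdetpos : ∀ y, 0 < (g y).det := fun y => (hgpd y).det_pos
  have hdetne : ∀ y, (g y).det ≠ 0 := fun y => (hdetpos y).ne'
  have hSpos : ∀ y, 0 < Real.sqrt (g y).det := fun y => Real.sqrt_pos.mpr (hdetpos y)
  have hc₁ne : ∀ y, c₁ y ≠ 0 := fun y => (hc₁pos y).ne'
  have hc₂ne : ∀ y, c₂ y ≠ 0 := fun y => (hc₂pos y).ne'
  have hdet : ContDiff ℝ (⊤ : ℕ∞) fun y => (g y).det := contDiff_matrix_det g hgsm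
  have hsqrt : ContDiff ℝ (⊤ : ℕ∞) fun y => Real.sqrt (g y).det := hdet.sqrt hdetne
  have hinv : ∀ i j, ContDiff ℝ (⊤ : ℕ∞) fun y => (g y)⁻¹ i j := contDiff_matrix_inv g hgsm hdetne
  have hw₁ : ContDiff ℝ (⊤ : ℕ∞) fun y => c₁ y ^ N := hc₁.pow N
  have hw₂ : ContDiff ℝ (⊤ : ℕ∞) fun y => c₂ y ^ N := hc₂.pow N
  have hu : ContDiff ℝ (⊤ : ℕ∞) fun y => (c₂ y / c₁ y) ^ N := (hc₂.div hc₁ hc₁ne).pow N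
  have hDA : ∀ {w : (Fin (N+2) → ℝ) → ℝ}, ContDiff ℝ (⊤ : ℕ∞) w → ∀ y, DifferentiableAt ℝ w y :=
    fun hw y => (hw.differentiable (by simp)).differentiableAt
  -- symmetry of the inverse metric
  have hsym : ∀ y (i j : Fin (N+2)), (g y)⁻¹ i j = (g y)⁻¹ j i := by
    intro y i j
    have hgt : (g y)ᵀ = g y := by
      have h := (hgpd y).isHermitian
      ext a b
      have := congrFun (congrFun h a) b
      simpa [Matrix.conjTranspose_apply] using this
    conv_lhs => rw [← hgt]
    rw [← Matrix.transpose_nonsing_inv, Matrix.transpose_apply]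
  -- smoothness of the P-functions
  have hPc : ∀ {w : (Fin (N+2) → ℝ) → ℝ}, ContDiff ℝ (⊤ : ℕ∞) w → ∀ i : Fin (N+2),
      ContDiff ℝ (⊤ : ℕ∞) (fun y => Real.sqrt (g y).det * ∑ j, (g y)⁻¹ i j * pd j w y) :=
    fun hw i => hsqrt.mul (ContDiff.sum fun j _ => (hinv i j).mul (contDiff_pd j hw))
  -- relation between pd of w₂ and pd of u, w₁
  have hpdrel : ∀ (j : Fin (N+2)) y, pd j (fun y => c₂ y ^ N) y
      = pd j (fun y => (c₂ y / c₁ y) ^ N) y * c₁ y ^ N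
        + (c₂ y / c₁ y) ^ N * pd j (fun y => c₁ y ^ N) y := by
    intro j y
    have hfe : (fun y => c₂ y ^ N) = fun y => (c₂ y / c₁ y) ^ N * c₁ y ^ N := by
      funext z
      rw [div_pow, div_mul_cancel₀ _ (pow_ne_zero N (hc₁ne z))]
    rw [hfe, pd_mul (hDA hu y) (hDA hw₁ y) j]
  -- Step A : rewrite the integrand functions
  have hA : ∀ i : Fin (N+2),
      (fun y => Real.sqrt ((c₁ y ^ 4 • g y)).det
          * ∑ j, (c₁ y ^ 4 • g y)⁻¹ i j * pd j (fun z => (c₂ z / c₁ z) ^ N) y)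
      = fun y => c₁ y ^ N * (Real.sqrt (g y).det * ∑ j, (g y)⁻¹ i j * pd j (fun z => c₂ z ^ N) y)
          - c₂ y ^ N * (Real.sqrt (g y).det * ∑ j, (g y)⁻¹ i j * pd j (fun z => c₁ z ^ N) y) := by
    intro i
    funext y
    have hsm : Real.sqrt ((c₁ y ^ 4 • g y)).det
        = c₁ y ^ (2*(N+2)) * Real.sqrt (g y).det := by
      rw [Matrix.det_smul, Fintype.card_fin]
      rw [show (c₁ y ^ 4) ^ (N+2) = (c₁ y ^ (2*(N+2)))^2 by
        rw [← pow_mul, ← pow_mul]; congr 1; ring]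
      rw [Real.sqrt_mul (sq_nonneg _), Real.sqrt_sq (pow_nonneg (hc₁pos y).le _)]
    have hism : (c₁ y ^ 4 • g y)⁻¹ = (c₁ y ^ 4)⁻¹ • (g y)⁻¹ := by
      refine Matrix.inv_eq_left_inv ?_
      rw [Matrix.smul_mul, Matrix.mul_smul, smul_smul,
        inv_mul_cancel₀ (pow_ne_zero 4 (hc₁ne y)),
        Matrix.nonsing_inv_mul _ (isUnit_iff_ne_zero.mpr (hdetne y)), one_smul]
    rw [hsm, hism]
    simp only [Matrix.smul_apply, smul_eq_mul]
    rw [Finset.mul_sum]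
    simp only [Finset.mul_sum, ← Finset.sum_sub_distrib]
    refine Finset.sum_congr rfl fun j _ => ?_
    rw [hpdrel j y]
    generalize pd j (fun z => (c₂ z / c₁ z) ^ N) y = U
    generalize pd j (fun z => c₁ z ^ N) y = D
    generalize (g y)⁻¹ i j = G
    generalize Real.sqrt (g y).det = Sq
    field_simp [hc₁ne y]
    have hci : c₁ y ^ N * (c₁ y)⁻¹ ^ N = 1 := by
      rw [← mul_pow, mul_inv_cancel₀ (hc₁ne y), one_pow]
    linear_combination (-(c₁ y ^ 4 * Sq * G * c₂ y ^ N * D)) * hci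
  -- Step B : compute the sum
  have hterm : ∀ i : Fin (N+2),
      pd i (fun y => c₁ y ^ N * (Real.sqrt (g y).det * ∑ j, (g y)⁻¹ i j * pd j (fun z => c₂ z ^ N) y)
          - c₂ y ^ N * (Real.sqrt (g y).det * ∑ j, (g y)⁻¹ i j * pd j (fun z => c₁ z ^ N) y)) x
      = (pd i (fun z => c₁ z ^ N) x
            * (Real.sqrt (g x).det * ∑ j, (g x)⁻¹ i j * pd j (fun z => c₂ z ^ N) x)
          + c₁ x ^ N * pd i (fun y => Real.sqrt (g y).det * ∑ j, (g y)⁻¹ i j * pd j (fun z => c₂ z ^ N) y) x)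
        - (pd i (fun z => c₂ z ^ N) x
            * (Real.sqrt (g x).det * ∑ j, (g x)⁻¹ i j * pd j (fun z => c₁ z ^ N) x)
          + c₂ x ^ N * pd i (fun y => Real.sqrt (g y).det * ∑ j, (g y)⁻¹ i j * pd j (fun z => c₁ z ^ N) y) x) := by
    intro i
    rw [pd_sub ((hDA hw₁ x).fun_mul (hDA (hPc hw₂ i) x)) ((hDA hw₂ x).fun_mul (hDA (hPc hw₁ i) x)),
      pd_mul (hDA hw₁ x) (hDA (hPc hw₂ i) x), pd_mul (hDA hw₂ x) (hDA (hPc hw₁ i) x)]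
  have hsumP : ∀ w : (Fin (N+2) → ℝ) → ℝ,
      ∑ i, pd i (fun y => Real.sqrt (g y).det * ∑ j, (g y)⁻¹ i j * pd j w y) x
        = Real.sqrt (g x).det * lapBel g w x := by
    intro w
    rw [lapBel, ← mul_assoc, mul_inv_cancel₀ (hSpos x).ne', one_mul]
  have hcross :
      ∑ i, pd i (fun z => c₁ z ^ N) x
          * (Real.sqrt (g x).det * ∑ j, (g x)⁻¹ i j * pd j (fun z => c₂ z ^ N) x)
      = ∑ i, pd i (fun z => c₂ z ^ N) x
          * (Real.sqrt (g x).det * ∑ j, (g x)⁻¹ i j * pd j (fun z => c₁ z ^ N) x) := by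
    simp only [Finset.mul_sum]
    rw [Finset.sum_comm]
    refine Finset.sum_congr rfl fun j _ => Finset.sum_congr rfl fun i _ => ?_
    rw [hsym x i j]
    ring
  -- assemble
  rw [lapBel]
  have hsmx : Real.sqrt ((c₁ x ^ 4 • g x)).det
      = c₁ x ^ (2*(N+2)) * Real.sqrt (g x).det := by
    rw [Matrix.det_smul, Fintype.card_fin]
    rw [show (c₁ x ^ 4) ^ (N+2) = (c₁ x ^ (2*(N+2)))^2 by
      rw [← pow_mul, ← pow_mul]; congr 1; ring]
    rw [Real.sqrt_mul (sq_nonneg _), Real.sqrt_sq (pow_nonneg (hc₁pos x).le _)]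
  rw [hsmx]
  calc ((c₁ x ^ (2*(N+2)) * Real.sqrt (g x).det))⁻¹ *
        ∑ i, pd i (fun y => Real.sqrt ((c₁ y ^ 4 • g y)).det
          * ∑ j, (c₁ y ^ 4 • g y)⁻¹ i j * pd j (fun z => (c₂ z / c₁ z) ^ N) y) x
      = (c₁ x ^ (2*(N+2)) * Real.sqrt (g x).det)⁻¹ *
        ((∑ i, pd i (fun z => c₁ z ^ N) x
            * (Real.sqrt (g x).det * ∑ j, (g x)⁻¹ i j * pd j (fun z => c₂ z ^ N) x)
          + c₁ x ^ N * (Real.sqrt (g x).det * lapBel g (fun z => c₂ z ^ N) x))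
        - (∑ i, pd i (fun z => c₂ z ^ N) x
            * (Real.sqrt (g x).det * ∑ j, (g x)⁻¹ i j * pd j (fun z => c₁ z ^ N) x)
          + c₂ x ^ N * (Real.sqrt (g x).det * lapBel g (fun z => c₁ z ^ N) x))) := by
        congr 1
        calc ∑ i, pd i (fun y => Real.sqrt ((c₁ y ^ 4 • g y)).det
              * ∑ j, (c₁ y ^ 4 • g y)⁻¹ i j * pd j (fun z => (c₂ z / c₁ z) ^ N) y) x
            = ∑ i, ((pd i (fun z => c₁ z ^ N) x
                * (Real.sqrt (g x).det * ∑ j, (g x)⁻¹ i j * pd j (fun z => c₂ z ^ N) x)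
              + c₁ x ^ N * pd i (fun y => Real.sqrt (g y).det
                  * ∑ j, (g y)⁻¹ i j * pd j (fun z => c₂ z ^ N) y) x)
            - (pd i (fun z => c₂ z ^ N) x
                * (Real.sqrt (g x).det * ∑ j, (g x)⁻¹ i j * pd j (fun z => c₁ z ^ N) x)
              + c₂ x ^ N * pd i (fun y => Real.sqrt (g y).det
                  * ∑ j, (g y)⁻¹ i j * pd j (fun z => c₁ z ^ N) y) x)) := by
              refine Finset.sum_congr rfl fun i _ => ?_
              rw [hA i, hterm i]
          _ = _ := by
              rw [Finset.sum_sub_distrib, Finset.sum_add_distrib, Finset.sum_add_distrib,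
                ← Finset.mul_sum, ← Finset.mul_sum, hsumP, hsumP]
    _ = _ := by
        rw [hcross]
        exact inv_helper _ _ _ _ _ _ _ (hSpos x).ne'

/-- If `c = c₂/c₁` satisfies `Δ_{c₁⁴g} c^{n-2} + λ(c^{n-2} - c^{n+2}) = 0` on `M`
(the closure of a bounded connected open domain), then `V_{g,c₁,λ} = V_{g,c₂,λ}`. -/
theorem stmt2 {n : ℕ} (hn : 3 ≤ n)
    (Ω : Set (Fin n → ℝ)) (hΩo : IsOpen Ω) (hΩconn : IsConnected Ω)
    (hΩb : Bornology.IsBounded Ω)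
    (g : (Fin n → ℝ) → Matrix (Fin n) (Fin n) ℝ)
    (hgpd : ∀ x, (g x).PosDef)
    (hgsm : ∀ i j, ContDiff ℝ (⊤ : ℕ∞) fun x => g x i j)
    (lam : ℝ)
    (c₁ c₂ : (Fin n → ℝ) → ℝ)
    (hc₁ : ContDiff ℝ (⊤ : ℕ∞) c₁) (hc₂ : ContDiff ℝ (⊤ : ℕ∞) c₂)
    (hc₁pos : ∀ x, 0 < c₁ x) (hc₂pos : ∀ x, 0 < c₂ x)
    (h : ∀ x ∈ closure Ω,
      lapBel (fun y => (c₁ y) ^ 4 • g y) (fun y => (c₂ y / c₁ y) ^ (n - 2)) x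
        + lam * ((c₂ x / c₁ x) ^ (n - 2) - (c₂ x / c₁ x) ^ (n + 2)) = 0) :
    ∀ x ∈ closure Ω, Vpot g lam c₁ x = Vpot g lam c₂ x := by
  obtain ⟨N, rfl⟩ : ∃ N, n = N + 2 := ⟨n - 2, by omega⟩
  intro x hx
  have hh := h x hx
  have hc₁ne : ∀ y, c₁ y ≠ 0 := fun y => (hc₁pos y).ne'
  have hc₂ne : ∀ y, c₂ y ≠ 0 := fun y => (hc₂pos y).ne'
  simp only [Nat.add_sub_cancel] at hh ⊢
  rw [lap_conf g hgpd hgsm c₁ c₂ hc₁ hc₂ hc₁pos hc₂pos x] at hh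
  simp only [Vpot, Nat.add_sub_cancel]
  have key : ∀ a : ℝ, a ^ (-(((N + 2 : ℕ) : ℤ) - 2)) = (a ^ N)⁻¹ := by
    intro a
    have he : (-(((N + 2 : ℕ) : ℤ) - 2)) = -(N : ℤ) := by push_cast; ring
    rw [he, _root_.zpow_neg, zpow_natCast]
  rw [key, key]
  generalize lapBel g (fun y => c₁ y ^ N) x = L₁ at hh ⊢
  generalize lapBel g (fun y => c₂ y ^ N) x = L₂ at hh ⊢
  have ha := hc₁ne x
  have hb := hc₂ne x
  have hclean : c₁ x ^ N * L₂ - c₂ x ^ N * L₁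
      = lam * c₁ x ^ N * c₂ x ^ N * (c₂ x ^ 4 - c₁ x ^ 4) := by
    field_simp at hh
    have hfac : (c₁ x ^ N * L₂ - c₂ x ^ N * L₁
        - lam * c₁ x ^ N * c₂ x ^ N * (c₂ x ^ 4 - c₁ x ^ 4))
        * (c₁ x ^ N * c₁ x ^ (N + 2 + 2)) = 0 := by
        have hu : c₁ x ^ N * (c₁ x ^ N)⁻¹ = 1 := mul_inv_cancel₀ (pow_ne_zero _ ha)
        have hv : c₁ x ^ (N + 2 + 2) * (c₁ x ^ (N + 2 + 2))⁻¹ = 1 :=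
          mul_inv_cancel₀ (pow_ne_zero _ ha)
        rw [div_pow, div_pow, div_eq_mul_inv, div_eq_mul_inv] at hh
        linear_combination (c₁ x ^ N * c₁ x ^ (N + 2 + 2)) * hh
          - (c₁ x ^ N * c₁ x ^ (N + 2 + 2)) * lam * c₁ x ^ (N + 2 + 2) * c₂ x ^ N * hu
          + (c₁ x ^ N * c₁ x ^ (N + 2 + 2)) * lam * c₁ x ^ N * c₂ x ^ (N + 2 + 2) * hv
    rcases mul_eq_zero.mp hfac with h0 | h0
    · linarith
    · exact absurd h0 (mul_ne_zero (pow_ne_zero _ ha) (pow_ne_zero _ ha))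
  field_simp
  linear_combination -hclean
end

section
/- Let λ ≤ 0, n ≥ 3, V a continuous function on M with V ≥ 0, and η smooth on ∂M with 0 < η ≤ 1. Let w̄ be the unique solution of Δ_g w̄ + (λ − V) w̄ = (λ − V)(max η)^{(n+2)/(n-2)} on M with w̄ = η on ∂M. Then 0 ≤ w̄ ≤ max η on M, and w̄ is an upper solution of Δ_g w + (λ − V)w − λ w^{(n+2)/(n-2)} = 0, i.e. Δ_g w̄ + (λ − V)w̄ − λ w̄^{(n+2)/(n-2)} ≤ 0 on M. -/
open scoped BigOperators

open scoped ContDiff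



/-- Second derivative test, scalar version. -/
lemma sdt_scalar {φ ψ : ℝ → ℝ} {Q : ℝ} (hmax : IsLocalMax φ 0)
    (hd : ∀ᶠ t in nhds (0:ℝ), HasDerivAt φ (ψ t) t)
    (hψ : HasDerivAt ψ Q 0) (hψ0 : ψ 0 = 0) : Q ≤ 0 := by
  by_contra hQ
  push_neg at hQ
  -- slope of ψ tends to Q
  have hslope : Filter.Tendsto (slope ψ 0) (nhdsWithin 0 {(0:ℝ)}ᶜ) (nhds Q) :=
    hasDerivAt_iff_tendsto_slope.1 hψ
  have hev1 : ∀ᶠ t in nhdsWithin 0 (Set.Ioi (0:ℝ)), 0 < ψ t := by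
    have h2 : ∀ᶠ t in nhdsWithin 0 {(0:ℝ)}ᶜ, Q/2 < slope ψ 0 t :=
      hslope.eventually_const_lt (half_lt_self hQ)
    have h3 : ∀ᶠ t in nhdsWithin 0 (Set.Ioi (0:ℝ)), Q/2 < slope ψ 0 t :=
      nhdsWithin_mono _ (fun t (ht : t ∈ Set.Ioi 0) => ne_of_gt ht) h2
    filter_upwards [h3, self_mem_nhdsWithin] with t ht ht'
    have htpos : (0:ℝ) < t := ht'
    have : slope ψ 0 t = ψ t / t := by
      rw [slope_def_field]; simp [hψ0]
    rw [this] at ht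
    have : 0 < ψ t / t := lt_trans (by positivity) ht
    exact (div_pos_iff.1 this).resolve_right (fun h => absurd htpos (not_lt.2 h.2.le)) |>.1
  -- extract a positive radius
  have hev : ∀ᶠ t in nhds (0:ℝ), (HasDerivAt φ (ψ t) t ∧ φ t ≤ φ 0) ∧ (t ∈ Set.Ioi (0:ℝ) → 0 < ψ t) := by
    refine (hd.and hmax).and ?_
    exact eventually_nhdsWithin_iff.1 hev1
  rcases Metric.eventually_nhds_iff_ball.1 hev with ⟨δ, hδpos, hδ⟩
  set b := δ/2 with hb
  have hbpos : 0 < b := by positivity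
  have hmem : ∀ t ∈ Set.Icc (0:ℝ) b, t ∈ Metric.ball (0:ℝ) δ := by
    intro t ht
    have : |t| < δ := by
      rw [abs_of_nonneg ht.1]
      calc t ≤ b := ht.2
        _ < δ := by rw [hb]; linarith
    simpa [Real.dist_eq] using this
  have hcont : ContinuousOn φ (Set.Icc 0 b) := fun t ht =>
    ((hδ t (hmem t ht)).1.1.continuousAt).continuousWithinAt
  have hderiv : ∀ t ∈ interior (Set.Icc (0:ℝ) b), 0 < deriv φ t := by
    intro t ht
    rw [interior_Icc] at ht
    have h1 := hδ t (hmem t ⟨ht.1.le, ht.2.le⟩)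
    rw [h1.1.1.deriv]
    exact h1.2 ht.1
  have hmono := StrictMonoOn.lt_iff_lt (strictMonoOn_of_deriv_pos (convex_Icc 0 b) hcont hderiv)
    (Set.left_mem_Icc.2 hbpos.le) (Set.right_mem_Icc.2 hbpos.le)
  have : φ 0 < φ b := (hmono).2 hbpos
  have hble := (hδ b (hmem b (Set.right_mem_Icc.2 hbpos.le))).1.2
  linarith

/-- Second derivative test, vector version: at an interior local max, the
second derivative quadratic form is negative semidefinite. -/
lemma sdt_vec {E : Type*} [NormedAddCommGroup E] [NormedSpace ℝ E] {v : E → ℝ} {x₀ : E}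
    (hv : ContDiffAt ℝ 2 v x₀) (hmax : IsLocalMax v x₀) (d : E) :
    fderiv ℝ (fderiv ℝ v) x₀ d d ≤ 0 := by
  set L : ℝ → E := fun t => x₀ + t • d with hL
  have hLd : ∀ t : ℝ, HasDerivAt L d t := by
    intro t
    have h1 : HasDerivAt (fun t : ℝ => t • d) ((1:ℝ) • d) t := (hasDerivAt_id t).smul_const d
    have h2 := h1.const_add x₀
    simp only [one_smul] at h2
    exact h2
  have hL0 : L 0 = x₀ := by simp [hL]
  have hLt : Filter.Tendsto L (nhds 0) (nhds x₀) := by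
    have := (hLd 0).continuousAt.tendsto
    rwa [hL0] at this
  -- differentiability near x₀
  have hev : ∀ᶠ y in nhds x₀, DifferentiableAt ℝ v y := by
    have h2 : (2 : WithTop ℕ∞) ≠ ∞ := by decide
    filter_upwards [hv.eventually h2] with y hy
    exact hy.differentiableAt (by norm_num)
  have hf'' : HasFDerivAt (fderiv ℝ v) (fderiv ℝ (fderiv ℝ v) x₀) x₀ := by
    have h1 : ContDiffAt ℝ 1 (fderiv ℝ v) x₀ := hv.fderiv_right (le_refl 2)
    exact (h1.differentiableAt one_ne_zero).hasFDerivAt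
  set ψ : ℝ → ℝ := fun t => fderiv ℝ v (L t) d with hψdef
  have hd : ∀ᶠ t in nhds (0:ℝ), HasDerivAt (fun t => v (L t)) (ψ t) t := by
    filter_upwards [hLt.eventually hev] with t ht
    exact ht.hasFDerivAt.comp_hasDerivAt t (hLd t)
  have hψ : HasDerivAt ψ (fderiv ℝ (fderiv ℝ v) x₀ d d + (fderiv ℝ v x₀) 0) 0 := by
    have h1 : HasDerivAt (fun t => fderiv ℝ v (L t)) (fderiv ℝ (fderiv ℝ v) x₀ d) 0 :=
      hf''.comp_hasDerivAt_of_eq (0:ℝ) (hLd 0) hL0.symm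
    have h2 := h1.clm_apply (hasDerivAt_const (0:ℝ) d)
    simpa [hL0] using h2
  have hψ0 : ψ 0 = 0 := by
    rw [hψdef]; simp only [hL0]
    rw [hmax.fderiv_eq_zero]; rfl
  have hmaxφ : IsLocalMax (fun t => v (L t)) 0 := by
    have := hLt.eventually hmax
    filter_upwards [this] with t ht
    simpa [hL0] using ht
  have := sdt_scalar hmaxφ hd hψ hψ0
  simpa using this

variable {n : ℕ} {N : WithTop ℕ∞}

lemma contDiff_det' {A : (Fin n → ℝ) → Matrix (Fin n) (Fin n) ℝ}
    (hA : ∀ i j, ContDiff ℝ N fun y => A y i j) :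
    ContDiff ℝ N fun y => (A y).det := by
  simp_rw [Matrix.det_apply]
  apply ContDiff.sum
  intro σ _
  have h : ContDiff ℝ N fun y => ∏ i, A y (σ i) i :=
    contDiff_prod fun i _ => hA (σ i) i
  simpa [Units.smul_def, zsmul_eq_mul] using (contDiff_const (c := ((Equiv.Perm.sign σ : ℤ) : ℝ))).mul h

lemma contDiff_adjugate {A : (Fin n → ℝ) → Matrix (Fin n) (Fin n) ℝ}
    (hA : ∀ i j, ContDiff ℝ N fun y => A y i j) (i j : Fin n) :
    ContDiff ℝ N fun y => (A y).adjugate i j := by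
  simp_rw [Matrix.adjugate_apply]
  apply contDiff_det'
  intro k l
  rcases eq_or_ne k j with h | h
  · simp [h, Matrix.updateRow_apply]
    exact contDiff_const
  · simp [h, Matrix.updateRow_apply]
    exact hA k l

lemma contDiff_inv_entry' {A : (Fin n → ℝ) → Matrix (Fin n) (Fin n) ℝ}
    (hA : ∀ i j, ContDiff ℝ N fun y => A y i j)
    (hdet : ∀ y, (A y).det ≠ 0) (i j : Fin n) :
    ContDiff ℝ N fun y => (A y)⁻¹ i j := by
  simp_rw [Matrix.inv_def, Ring.inverse_eq_inv, Matrix.smul_apply, smul_eq_mul]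
  exact ((contDiff_det' hA).inv hdet).mul (contDiff_adjugate hA i j)

lemma contDiff_sqrt_det' {A : (Fin n → ℝ) → Matrix (Fin n) (Fin n) ℝ}
    (hA : ∀ i j, ContDiff ℝ N fun y => A y i j)
    (hdet : ∀ y, (A y).det ≠ 0) :
    ContDiff ℝ N fun y => Real.sqrt (A y).det := by
  rw [contDiff_iff_contDiffAt]
  intro y
  exact (Real.contDiffAt_sqrt (hdet y)).comp y (contDiff_det' hA).contDiffAt

open scoped MatrixOrder in
/-- If `a` is positive semidefinite and the quadratic form `H` is negative semidefinite,
then `∑ a i j * H i j ≤ 0`. -/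
lemma trace_nonpos {n : ℕ} {a : Matrix (Fin n) (Fin n) ℝ} (ha : a.PosSemidef)
    {H : Fin n → Fin n → ℝ} (hH : ∀ u : Fin n → ℝ, ∑ i, ∑ j, u i * u j * H i j ≤ 0) :
    ∑ i, ∑ j, a i j * H i j ≤ 0 := by
  set s := CFC.sqrt a with hs
  have hss : s * s = a := CFC.sqrt_mul_sqrt_self a ha.nonneg
  have hsym : ∀ i j, s i j = s j i := by
    intro i j
    have : (CFC.sqrt a).IsHermitian := by simpa using (CFC.sqrt_nonneg a).1
    have h2 := congrFun (congrFun this.eq i) j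
    simpa [Matrix.conjTranspose_apply] using h2.symm
  have key : ∀ i j, a i j = ∑ k, s k i * s k j := by
    intro i j
    rw [← hss, Matrix.mul_apply]
    exact Finset.sum_congr rfl fun k _ => by rw [hsym i k]
  calc ∑ i, ∑ j, a i j * H i j
      = ∑ i, ∑ j, ∑ k, s k i * s k j * H i j := by
        refine Finset.sum_congr rfl fun i _ => Finset.sum_congr rfl fun j _ => ?_
        rw [key, Finset.sum_mul]
    _ = ∑ i, ∑ k : Fin n, ∑ j, s k i * s k j * H i j :=
        Finset.sum_congr rfl fun i _ => Finset.sum_comm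
    _ = ∑ k : Fin n, ∑ i, ∑ j, s k i * s k j * H i j := Finset.sum_comm
    _ ≤ 0 := Finset.sum_nonpos fun k _ => hH fun i => s k i

/-- At an interior local maximum, `lapBel g v ≤ 0`. -/
lemma lap_nonpos {n : ℕ} {g : (Fin n → ℝ) → Matrix (Fin n) (Fin n) ℝ}
    (hgpd : ∀ x, (g x).PosDef) (hgsm : ∀ i j, ContDiff ℝ 2 fun x => g x i j)
    {Ω : Set (Fin n → ℝ)} (hΩo : IsOpen Ω) {v : (Fin n → ℝ) → ℝ}
    (hv : ContDiffOn ℝ 2 v Ω) {x₀ : Fin n → ℝ} (hx₀ : x₀ ∈ Ω)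
    (hmax : IsLocalMax v x₀) : lapBel g v x₀ ≤ 0 := by
  classical
  have hdet : ∀ y, (g y).det ≠ 0 := fun y => (hgpd y).det_pos.ne'
  have ha : ∀ i j, ContDiff ℝ 1 fun y => (g y)⁻¹ i j :=
    fun i j => contDiff_inv_entry' (fun i j => (hgsm i j).of_le (by norm_num)) hdet i j
  have hS : ContDiff ℝ 1 fun y => Real.sqrt (g y).det :=
    contDiff_sqrt_det' (fun i j => (hgsm i j).of_le (by norm_num)) hdet
  have hSpos : 0 < Real.sqrt (g x₀).det := Real.sqrt_pos.2 (hgpd x₀).det_pos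
  have hvx : ContDiffAt ℝ 2 v x₀ := hv.contDiffAt (hΩo.mem_nhds hx₀)
  set F'' := fderiv ℝ (fderiv ℝ v) x₀ with hF''
  have hf'' : HasFDerivAt (fderiv ℝ v) F'' x₀ :=
    ((hvx.fderiv_right (le_refl 2)).differentiableAt one_ne_zero).hasFDerivAt
  have hf'0 : fderiv ℝ v x₀ = 0 := hmax.fderiv_eq_zero
  have hpd0 : ∀ j, pd j v x₀ = 0 := by
    intro j; simp [pd, hf'0]
  set c : Fin n → (((Fin n → ℝ) →L[ℝ] ℝ) →L[ℝ] ℝ) :=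
    fun j => ContinuousLinearMap.apply ℝ ℝ (Pi.single j 1) with hc
  have hpdj : ∀ j, HasFDerivAt (fun y => pd j v y) ((c j).comp F'') x₀ := by
    intro j
    exact ((c j).hasFDerivAt).comp x₀ hf''
  have hkey : ∀ i, pd i (fun y => Real.sqrt (g y).det * ∑ j, (g y)⁻¹ i j * pd j v y) x₀
      = Real.sqrt (g x₀).det * ∑ j, (g x₀)⁻¹ i j * (F'' (Pi.single i 1) (Pi.single j 1)) := by
    intro i
    have hPj : ∀ j, HasFDerivAt (fun y => (g y)⁻¹ i j * pd j v y)
        ((fun y => (g y)⁻¹ i j) x₀ • ((c j).comp F'')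
          + pd j v x₀ • fderiv ℝ (fun y => (g y)⁻¹ i j) x₀) x₀ :=
      fun j => ((ha i j).differentiable one_ne_zero x₀).hasFDerivAt.mul (hpdj j)
    have hP : HasFDerivAt (fun y => ∑ j, (g y)⁻¹ i j * pd j v y)
        (∑ j, ((fun y => (g y)⁻¹ i j) x₀ • ((c j).comp F'')
          + pd j v x₀ • fderiv ℝ (fun y => (g y)⁻¹ i j) x₀)) x₀ :=
      HasFDerivAt.fun_sum (fun j _ => hPj j)
    have hSx : HasFDerivAt (fun y => Real.sqrt (g y).det)
        (fderiv ℝ (fun y => Real.sqrt (g y).det) x₀) x₀ :=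
      (hS.differentiable one_ne_zero x₀).hasFDerivAt
    have hΦ := hSx.mul hP
    simp only [Pi.mul_def] at hΦ
    rw [pd, hΦ.fderiv]
    simp only [hpd0, zero_smul, add_zero, mul_zero, Finset.sum_const_zero,
      ContinuousLinearMap.add_apply, ContinuousLinearMap.smul_apply,
      ContinuousLinearMap.sum_apply, ContinuousLinearMap.comp_apply,
      ContinuousLinearMap.zero_apply, smul_eq_mul, hc,
      ContinuousLinearMap.apply_apply]
  have hlap : lapBel g v x₀
      = ∑ i, ∑ j, (g x₀)⁻¹ i j * (F'' (Pi.single i 1) (Pi.single j 1)) := by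
    rw [lapBel]
    rw [Finset.sum_congr rfl fun i _ => hkey i]
    rw [← Finset.mul_sum, ← mul_assoc, inv_mul_cancel₀ hSpos.ne', one_mul]
  rw [hlap]
  have hexp : ∀ u : Fin n → ℝ,
      (F'' u) u = ∑ i, ∑ j, u i * u j * (F'' (Pi.single i 1) (Pi.single j 1)) := by
    intro u
    have hrepr : u = ∑ i, u i • (Pi.single i 1 : Fin n → ℝ) := by
      funext j
      simp [Finset.sum_apply, Pi.single_apply]
    have h1 : ∀ (T : (Fin n → ℝ) →L[ℝ] ℝ), T u = ∑ j, u j * T (Pi.single j 1) := by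
      intro T
      conv_lhs => rw [hrepr]
      rw [map_sum]
      exact Finset.sum_congr rfl fun j _ => by rw [map_smul, smul_eq_mul]
    have h2 : F'' u = ∑ i, u i • F'' (Pi.single i 1) := by
      conv_lhs => rw [hrepr]
      rw [map_sum]
      exact Finset.sum_congr rfl fun i _ => by rw [map_smul]
    calc (F'' u) u = ∑ i, u i * (F'' (Pi.single i 1) u) := by
          rw [h2]; simp [ContinuousLinearMap.sum_apply, smul_eq_mul]
      _ = ∑ i, ∑ j, u i * u j * (F'' (Pi.single i 1) (Pi.single j 1)) := by
          refine Finset.sum_congr rfl fun i _ => ?_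
          rw [h1, Finset.mul_sum]
          exact Finset.sum_congr rfl fun j _ => by ring
  have hH : ∀ u : Fin n → ℝ,
      ∑ i, ∑ j, u i * u j * (F'' (Pi.single i 1) (Pi.single j 1)) ≤ 0 := by
    intro u
    rw [← hexp]
    exact sdt_vec hvx hmax u
  exact trace_nonpos ((hgpd x₀).inv).posSemidef hH

lemma pd_sub_const {n : ℕ} (j : Fin n) (u : (Fin n → ℝ) → ℝ) (C : ℝ) :
    pd j (fun y => u y - C) = pd j u := by
  funext y
  simp [pd, fderiv_sub_const]

lemma lapBel_sub_const {n : ℕ} (g : (Fin n → ℝ) → Matrix (Fin n) (Fin n) ℝ)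
    (u : (Fin n → ℝ) → ℝ) (C : ℝ) :
    lapBel g (fun y => u y - C) = lapBel g u := by
  funext x
  unfold lapBel
  congr 1
  refine Finset.sum_congr rfl fun i _ => ?_
  congr 1
  funext y
  simp only [pd_sub_const]

lemma pd_neg {n : ℕ} (j : Fin n) (u : (Fin n → ℝ) → ℝ) :
    pd j (fun y => -u y) = fun y => -pd j u y := by
  funext y
  simp [pd, fderiv_neg]

lemma lapBel_neg {n : ℕ} (g : (Fin n → ℝ) → Matrix (Fin n) (Fin n) ℝ)
    (u : (Fin n → ℝ) → ℝ) (x : Fin n → ℝ) :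
    lapBel g (fun y => -u y) x = -lapBel g u x := by
  unfold lapBel
  rw [← mul_neg, ← Finset.sum_neg_distrib]
  congr 1
  refine Finset.sum_congr rfl fun i _ => ?_
  have : (fun y => Real.sqrt (g y).det * ∑ j, (g y)⁻¹ i j * pd j (fun z => -u z) y)
      = fun y => -(Real.sqrt (g y).det * ∑ j, (g y)⁻¹ i j * pd j u y) := by
    funext y
    simp only [pd_neg]
    simp [Finset.sum_neg_distrib, mul_neg]
  rw [this]
  simp [pd, fderiv_neg]

/-- The inner expressions of `lapBel` for a `C²` function on an open set are `C¹` there. -/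
lemma inner_contDiffOn {n : ℕ} {g : (Fin n → ℝ) → Matrix (Fin n) (Fin n) ℝ}
    (hgpd : ∀ x, (g x).PosDef) (hgsm : ∀ i j, ContDiff ℝ 2 fun x => g x i j)
    {Ω : Set (Fin n → ℝ)} (hΩo : IsOpen Ω) {u : (Fin n → ℝ) → ℝ}
    (hu : ContDiffOn ℝ 2 u Ω) (i : Fin n) :
    ContDiffOn ℝ 1 (fun y => Real.sqrt (g y).det * ∑ j, (g y)⁻¹ i j * pd j u y) Ω := by
  have hdet : ∀ y, (g y).det ≠ 0 := fun y => (hgpd y).det_pos.ne'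
  have ha : ∀ i j, ContDiff ℝ 1 fun y => (g y)⁻¹ i j :=
    fun i j => contDiff_inv_entry' (fun i j => (hgsm i j).of_le (by norm_num)) hdet i j
  have hS : ContDiff ℝ 1 fun y => Real.sqrt (g y).det :=
    contDiff_sqrt_det' (fun i j => (hgsm i j).of_le (by norm_num)) hdet
  have hfd : ContDiffOn ℝ 1 (fderiv ℝ u) Ω := hu.fderiv_of_isOpen hΩo (le_refl 2)
  have hpdj : ∀ j : Fin n, ContDiffOn ℝ 1 (fun y => pd j u y) Ω := by
    intro j
    exact (ContinuousLinearMap.apply ℝ ℝ (Pi.single j 1 : Fin n → ℝ)).contDiff.comp_contDiffOn hfd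
  exact hS.contDiffOn.mul <| ContDiffOn.sum fun j _ => ((ha i j).contDiffOn).mul (hpdj j)

/-- Linearity of `lapBel` at interior points. -/
lemma lapBel_add_mul {n : ℕ} {g : (Fin n → ℝ) → Matrix (Fin n) (Fin n) ℝ}
    (hgpd : ∀ x, (g x).PosDef) (hgsm : ∀ i j, ContDiff ℝ 2 fun x => g x i j)
    {Ω : Set (Fin n → ℝ)} (hΩo : IsOpen Ω) {u w : (Fin n → ℝ) → ℝ}
    (hu : ContDiffOn ℝ 2 u Ω) (hw : ContDiff ℝ 2 w) (ε : ℝ)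
    {x : Fin n → ℝ} (hx : x ∈ Ω) :
    lapBel g (fun y => u y + ε * w y) x = lapBel g u x + ε * lapBel g w x := by
  have hpd : ∀ j : Fin n, ∀ y ∈ Ω, pd j (fun z => u z + ε * w z) y
      = pd j u y + ε * pd j w y := by
    intro j y hy
    have hud : DifferentiableAt ℝ u y :=
      (hu.contDiffAt (hΩo.mem_nhds hy)).differentiableAt (by norm_num)
    have hwd : DifferentiableAt ℝ (fun z => ε * w z) y :=
      (hw.differentiable (by norm_num) y).const_mul ε
    rw [pd, fderiv_fun_add hud hwd, pd, pd]
    simp [fderiv_const_mul (hw.differentiable (by norm_num) y)]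
  -- the inner functions
  have hinner : ∀ i : Fin n, ∀ y ∈ Ω,
      (fun y => Real.sqrt (g y).det * ∑ j, (g y)⁻¹ i j * pd j (fun z => u z + ε * w z) y) y
      = (fun y => Real.sqrt (g y).det * ∑ j, (g y)⁻¹ i j * pd j u y) y
        + ε * (fun y => Real.sqrt (g y).det * ∑ j, (g y)⁻¹ i j * pd j w y) y := by
    intro i y hy
    simp only
    rw [Finset.sum_congr rfl fun j _ => by rw [hpd j y hy]]
    have hterm : ∀ j : Fin n, (g y)⁻¹ i j * (pd j u y + ε * pd j w y)
        = (g y)⁻¹ i j * pd j u y + ε * ((g y)⁻¹ i j * pd j w y) := fun j => by ring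
    rw [Finset.sum_congr rfl fun j _ => hterm j, Finset.sum_add_distrib, ← Finset.mul_sum]
    ring
  have hdiffu : ∀ i : Fin n, DifferentiableAt ℝ
      (fun y => Real.sqrt (g y).det * ∑ j, (g y)⁻¹ i j * pd j u y) x :=
    fun i => ((inner_contDiffOn hgpd hgsm hΩo hu i).contDiffAt
      (hΩo.mem_nhds hx)).differentiableAt one_ne_zero
  have hdiffw : ∀ i : Fin n, DifferentiableAt ℝ
      (fun y => Real.sqrt (g y).det * ∑ j, (g y)⁻¹ i j * pd j w y) x :=
    fun i => ((inner_contDiffOn hgpd hgsm hΩo (hw.contDiffOn) i).contDiffAt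
      (hΩo.mem_nhds hx)).differentiableAt one_ne_zero
  have hpdi : ∀ i : Fin n,
      pd i (fun y => Real.sqrt (g y).det * ∑ j, (g y)⁻¹ i j * pd j (fun z => u z + ε * w z) y) x
      = pd i (fun y => Real.sqrt (g y).det * ∑ j, (g y)⁻¹ i j * pd j u y) x
        + ε * pd i (fun y => Real.sqrt (g y).det * ∑ j, (g y)⁻¹ i j * pd j w y) x := by
    intro i
    have heq : (fun y => Real.sqrt (g y).det * ∑ j, (g y)⁻¹ i j * pd j (fun z => u z + ε * w z) y)
        =ᶠ[nhds x] (fun y => (fun y => Real.sqrt (g y).det * ∑ j, (g y)⁻¹ i j * pd j u y) y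
          + ε * (fun y => Real.sqrt (g y).det * ∑ j, (g y)⁻¹ i j * pd j w y) y) := by
      filter_upwards [hΩo.mem_nhds hx] with y hy
      exact hinner i y hy
    rw [pd, heq.fderiv_eq, fderiv_fun_add (hdiffu i) ((hdiffw i).const_mul ε),
      fderiv_const_mul (hdiffw i)]
    simp [pd]
  rw [lapBel, Finset.sum_congr rfl fun i _ => hpdi i]
  rw [lapBel, lapBel, Finset.sum_add_distrib, mul_add]
  congr 1
  rw [← Finset.mul_sum]
  ring

/-- Auxiliary first-order coefficient of `lapBel` in the direction `i0`. -/
noncomputable def Bfun {n : ℕ} (g : (Fin n → ℝ) → Matrix (Fin n) (Fin n) ℝ)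
    (i0 : Fin n) (x : Fin n → ℝ) : ℝ :=
  (Real.sqrt (g x).det)⁻¹ *
    ∑ i, pd i (fun y => Real.sqrt (g y).det * (g y)⁻¹ i i0) x

lemma pd_exp {n : ℕ} (i0 : Fin n) (α : ℝ) (j : Fin n) (y : Fin n → ℝ) :
    pd j (fun z => Real.exp (α * z i0)) y
      = Real.exp (α * y i0) * (α * (Pi.single j 1 : Fin n → ℝ) i0) := by
  have hl : HasFDerivAt (fun z : Fin n → ℝ => α * z i0)
      (α • (ContinuousLinearMap.proj i0 : (Fin n → ℝ) →L[ℝ] ℝ)) y :=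
    (ContinuousLinearMap.proj i0 : (Fin n → ℝ) →L[ℝ] ℝ).hasFDerivAt.const_mul α
  have hcomp : HasFDerivAt (fun z : Fin n → ℝ => Real.exp (α * z i0))
      (Real.exp (α * y i0) • (α • (ContinuousLinearMap.proj i0 : (Fin n → ℝ) →L[ℝ] ℝ))) y := by
    exact (Real.hasDerivAt_exp (α * y i0)).comp_hasFDerivAt y hl
  rw [pd, hcomp.fderiv]
  simp [ContinuousLinearMap.smul_apply, mul_comm]

lemma hasFDerivAt_exp_aux {n : ℕ} (i0 : Fin n) (α : ℝ) (y : Fin n → ℝ) :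
    HasFDerivAt (fun z : Fin n → ℝ => Real.exp (α * z i0))
      (Real.exp (α * y i0) • (α • (ContinuousLinearMap.proj i0 : (Fin n → ℝ) →L[ℝ] ℝ))) y := by
  have hl : HasFDerivAt (fun z : Fin n → ℝ => α * z i0)
      (α • (ContinuousLinearMap.proj i0 : (Fin n → ℝ) →L[ℝ] ℝ)) y :=
    (ContinuousLinearMap.proj i0 : (Fin n → ℝ) →L[ℝ] ℝ).hasFDerivAt.const_mul α
  exact (Real.hasDerivAt_exp (α * y i0)).comp_hasFDerivAt y hl

lemma contDiff_exp_aux {n : ℕ} (i0 : Fin n) (α : ℝ) :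
    ContDiff ℝ 2 (fun z : Fin n → ℝ => Real.exp (α * z i0)) := by
  apply (Real.contDiff_exp (n := 2)).comp
  exact contDiff_const.mul (ContinuousLinearMap.proj i0 : (Fin n → ℝ) →L[ℝ] ℝ).contDiff

/-- Explicit formula for `lapBel` applied to the exponential barrier. -/
lemma lapBel_barrier {n : ℕ} {g : (Fin n → ℝ) → Matrix (Fin n) (Fin n) ℝ}
    (hgpd : ∀ x, (g x).PosDef) (hgsm : ∀ i j, ContDiff ℝ 2 fun x => g x i j)
    (i0 : Fin n) (α : ℝ) (x : Fin n → ℝ) :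
    lapBel g (fun y => Real.exp (α * y i0)) x
      = Real.exp (α * x i0) * (α^2 * (g x)⁻¹ i0 i0 + α * Bfun g i0 x) := by
  have hdet : ∀ y, (g y).det ≠ 0 := fun y => (hgpd y).det_pos.ne'
  have ha : ∀ i j, ContDiff ℝ 1 fun y => (g y)⁻¹ i j :=
    fun i j => contDiff_inv_entry' (fun i j => (hgsm i j).of_le (by norm_num)) hdet i j
  have hS : ContDiff ℝ 1 fun y => Real.sqrt (g y).det :=
    contDiff_sqrt_det' (fun i j => (hgsm i j).of_le (by norm_num)) hdet
  have hSpos : 0 < Real.sqrt (g x).det := Real.sqrt_pos.2 (hgpd x).det_pos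
  -- the inner function is (√det * a_{i i0}) * (α * exp)
  have hinner : ∀ i : Fin n,
      (fun y => Real.sqrt (g y).det * ∑ j, (g y)⁻¹ i j * pd j (fun z => Real.exp (α * z i0)) y)
      = (fun y => (Real.sqrt (g y).det * (g y)⁻¹ i i0) * (α * Real.exp (α * y i0))) := by
    intro i
    funext y
    rw [Finset.sum_congr rfl fun j _ => by rw [pd_exp i0 α j y]]
    have hsum : ∑ j, (g y)⁻¹ i j * (Real.exp (α * y i0) * (α * (Pi.single j 1 : Fin n → ℝ) i0))
        = (g y)⁻¹ i i0 * (Real.exp (α * y i0) * α) := by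
      rw [Finset.sum_eq_single i0]
      · rw [Pi.single_eq_same]; ring_nf
      · intro j _ hj
        rw [Pi.single_eq_of_ne (Ne.symm hj), mul_zero, mul_zero, mul_zero]
      · intro h; exact absurd (Finset.mem_univ i0) h
    rw [hsum]; ring
  have hpdi : ∀ i : Fin n,
      pd i (fun y => (Real.sqrt (g y).det * (g y)⁻¹ i i0) * (α * Real.exp (α * y i0))) x
      = (Real.sqrt (g x).det * (g x)⁻¹ i i0) * (α * (Real.exp (α * x i0) * (α * (Pi.single i 1 : Fin n → ℝ) i0)))
        + (α * Real.exp (α * x i0)) * pd i (fun y => Real.sqrt (g y).det * (g y)⁻¹ i i0) x := by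
    intro i
    have hG : HasFDerivAt (fun y => Real.sqrt (g y).det * (g y)⁻¹ i i0)
        (fderiv ℝ (fun y => Real.sqrt (g y).det * (g y)⁻¹ i i0) x) x :=
      (((hS.mul (ha i i0))).differentiable one_ne_zero x).hasFDerivAt
    have hE : HasFDerivAt (fun y => α * Real.exp (α * y i0))
        (α • (Real.exp (α * x i0) • (α • (ContinuousLinearMap.proj i0 : (Fin n → ℝ) →L[ℝ] ℝ)))) x :=
      (hasFDerivAt_exp_aux i0 α x).const_mul α
    have hprod := hG.mul hE
    simp only [Pi.mul_def] at hprod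
    rw [pd, hprod.fderiv]
    simp only [ContinuousLinearMap.add_apply, ContinuousLinearMap.smul_apply,
      ContinuousLinearMap.proj_apply, smul_eq_mul, pd]
    try ring
  rw [lapBel, Finset.sum_congr rfl fun i _ => by rw [hinner i, hpdi i]]
  rw [Finset.sum_add_distrib]
  have hfirst : ∑ i : Fin n, (Real.sqrt (g x).det * (g x)⁻¹ i i0)
      * (α * (Real.exp (α * x i0) * (α * (Pi.single i 1 : Fin n → ℝ) i0)))
      = Real.sqrt (g x).det * (g x)⁻¹ i0 i0 * (α * (Real.exp (α * x i0) * α)) := by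
    rw [Finset.sum_eq_single i0]
    · rw [Pi.single_eq_same]; ring_nf
    · intro i _ hi
      rw [Pi.single_eq_of_ne (Ne.symm hi)]; ring
    · intro h; exact absurd (Finset.mem_univ i0) h
  rw [hfirst, ← Finset.mul_sum, Bfun]
  field_simp

lemma Bfun_continuous {n : ℕ} {g : (Fin n → ℝ) → Matrix (Fin n) (Fin n) ℝ}
    (hgpd : ∀ x, (g x).PosDef) (hgsm : ∀ i j, ContDiff ℝ 2 fun x => g x i j)
    (i0 : Fin n) : Continuous (Bfun g i0) := by
  have hdet : ∀ y, (g y).det ≠ 0 := fun y => (hgpd y).det_pos.ne'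
  have ha : ∀ i j, ContDiff ℝ 1 fun y => (g y)⁻¹ i j :=
    fun i j => contDiff_inv_entry' (fun i j => (hgsm i j).of_le (by norm_num)) hdet i j
  have hS : ContDiff ℝ 1 fun y => Real.sqrt (g y).det :=
    contDiff_sqrt_det' (fun i j => (hgsm i j).of_le (by norm_num)) hdet
  have hSne : ∀ y, Real.sqrt (g y).det ≠ 0 :=
    fun y => (Real.sqrt_pos.2 (hgpd y).det_pos).ne'
  unfold Bfun
  apply Continuous.mul
  · exact (hS.continuous).inv₀ hSne
  · apply continuous_finset_sum
    intro i _
    have hG : ContDiff ℝ 1 fun y => Real.sqrt (g y).det * (g y)⁻¹ i i0 := hS.mul (ha i i0)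
    have hfd : Continuous (fderiv ℝ fun y => Real.sqrt (g y).det * (g y)⁻¹ i i0) :=
      hG.continuous_fderiv one_ne_zero
    exact ((ContinuousLinearMap.apply ℝ ℝ (Pi.single i 1 : Fin n → ℝ)).continuous).comp hfd

lemma inv_diag_pos {n : ℕ} {M : Matrix (Fin n) (Fin n) ℝ} (hM : M.PosDef) (i : Fin n) :
    0 < M⁻¹ i i := by
  exact hM.inv.diag_pos

/-- Weak maximum principle for `lapBel g + c` with `c ≤ 0`. -/
lemma maxprin {n : ℕ} (hn0 : 0 < n) {g : (Fin n → ℝ) → Matrix (Fin n) (Fin n) ℝ}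
    (hgpd : ∀ x, (g x).PosDef) (hgsm : ∀ i j, ContDiff ℝ 2 fun x => g x i j)
    {Ω : Set (Fin n → ℝ)} (hΩo : IsOpen Ω) (hΩb : Bornology.IsBounded Ω)
    {cf : (Fin n → ℝ) → ℝ} (hcc : ContinuousOn cf (closure Ω))
    (hcnp : ∀ x ∈ closure Ω, cf x ≤ 0)
    {u : (Fin n → ℝ) → ℝ} (hu2 : ContDiffOn ℝ 2 u Ω) (huc : ContinuousOn u (closure Ω))
    (hLu : ∀ x ∈ Ω, 0 ≤ lapBel g u x + cf x * u x)
    (hub : ∀ x ∈ frontier Ω, u x ≤ 0) :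
    ∀ x ∈ closure Ω, u x ≤ 0 := by
  classical
  rcases (closure Ω).eq_empty_or_nonempty with hemp | hne
  · intro x hx; rw [hemp] at hx; exact absurd hx (Set.notMem_empty x)
  have hK : IsCompact (closure Ω) := hΩb.isCompact_closure
  set i0 : Fin n := ⟨0, hn0⟩ with hi0
  -- bounds for the coefficients on the compact closure
  have ha00c : ContinuousOn (fun x => (g x)⁻¹ i0 i0) (closure Ω) := by
    have hdet : ∀ y, (g y).det ≠ 0 := fun y => (hgpd y).det_pos.ne'
    exact ((contDiff_inv_entry' (fun i j => (hgsm i j).of_le (by norm_num : (1:WithTop ℕ∞) ≤ 2))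
      hdet i0 i0).continuous).continuousOn
  obtain ⟨xm, hxm, hxmin⟩ := hK.exists_isMinOn hne ha00c
  set m₀ : ℝ := (g xm)⁻¹ i0 i0 with hm₀
  have hm₀pos : 0 < m₀ := inv_diag_pos (hgpd xm) i0
  have hm₀le : ∀ x ∈ closure Ω, m₀ ≤ (g x)⁻¹ i0 i0 := fun x hx => hxmin hx
  obtain ⟨xb, hxb, hxbmin⟩ := hK.exists_isMinOn hne ((Bfun_continuous hgpd hgsm i0).continuousOn)
  set Kb : ℝ := max 0 (-(Bfun g i0 xb)) with hKb
  have hKb0 : 0 ≤ Kb := le_max_left _ _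
  have hKble : ∀ x ∈ closure Ω, -Kb ≤ Bfun g i0 x := by
    intro x hx
    have h1 : Bfun g i0 xb ≤ Bfun g i0 x := hxbmin hx
    have h2 := le_max_right (0:ℝ) (-(Bfun g i0 xb))
    rw [← hKb] at h2
    linarith
  obtain ⟨xc, hxc, hxcmin⟩ := hK.exists_isMinOn hne hcc
  set Kc : ℝ := max 0 (-(cf xc)) with hKc
  have hKc0 : 0 ≤ Kc := le_max_left _ _
  have hKcle : ∀ x ∈ closure Ω, -Kc ≤ cf x := by
    intro x hx
    have h1 : cf xc ≤ cf x := hxcmin hx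
    have h2 := le_max_right (0:ℝ) (-(cf xc))
    rw [← hKc] at h2
    linarith
  -- choice of α
  obtain ⟨α, hα1, hαm⟩ : ∃ α : ℝ, 1 ≤ α ∧ Kb + Kc + 1 ≤ α * m₀ :=
    ⟨max 1 ((Kb + Kc + 1)/m₀), le_max_left _ _,
      (div_le_iff₀ hm₀pos).1 (le_max_right _ _)⟩
  have hα0 : 0 ≤ α := by linarith
  have hkey : ∀ x ∈ closure Ω, 0 < α^2 * (g x)⁻¹ i0 i0 + α * Bfun g i0 x + cf x := by
    intro x hx
    have h1 := hm₀le x hx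
    have h2 := hKble x hx
    have h3 := hKcle x hx
    have hA : α^2 * m₀ ≤ α^2 * (g x)⁻¹ i0 i0 := mul_le_mul_of_nonneg_left h1 (sq_nonneg α)
    have hC : α * (Kb + Kc + 1) ≤ α * (α * m₀) := mul_le_mul_of_nonneg_left hαm hα0
    have hKc' : Kc ≤ α * Kc := le_mul_of_one_le_left hKc0 hα1
    have hB' := mul_le_mul_of_nonneg_left h2 hα0
    nlinarith [hA, hC, hKc', hB', h3, hα1]
  -- the barrier
  set w : (Fin n → ℝ) → ℝ := fun y => Real.exp (α * y i0) with hw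
  have hwpos : ∀ y, 0 < w y := fun y => Real.exp_pos _
  have hwcont : Continuous w := by
    rw [hw]; fun_prop
  obtain ⟨xw, hxw, hxwmax⟩ := hK.exists_isMaxOn hne hwcont.continuousOn
  set W : ℝ := max 0 (w xw) with hW
  have hW0 : 0 ≤ W := le_max_left _ _
  have hwleW : ∀ x ∈ closure Ω, w x ≤ W := fun x hx => le_trans (hxwmax hx) (le_max_right _ _)
  -- the ε-perturbation argument
  have hmain : ∀ ε : ℝ, 0 < ε → ∀ x ∈ closure Ω, u x ≤ ε * W := by
    intro ε hε x hx
    set uε : (Fin n → ℝ) → ℝ := fun y => u y + ε * w y with huε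
    have huεc : ContinuousOn uε (closure Ω) :=
      huc.add ((hwcont.continuousOn).const_smul ε)
    obtain ⟨x₀, hx₀K, hx₀max⟩ := hK.exists_isMaxOn hne huεc
    have hux : u x ≤ uε x := by
      have := (hwpos x).le
      have h0 : 0 ≤ ε * w x := mul_nonneg hε.le this
      simp only [huε]; linarith
    by_cases hx₀Ω : x₀ ∈ Ω
    · by_cases hval : uε x₀ ≤ 0
      · calc u x ≤ uε x := hux
          _ ≤ uε x₀ := hx₀max hx
          _ ≤ 0 := hval
          _ ≤ ε * W := by positivity
      · exfalso
        push_neg at hval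
        have hloc : IsLocalMax uε x₀ := by
          filter_upwards [hΩo.mem_nhds hx₀Ω] with y hy
          exact hx₀max (subset_closure hy)
        have huε2 : ContDiffOn ℝ 2 uε Ω :=
          hu2.add ((contDiff_const.mul (contDiff_exp_aux i0 α)).contDiffOn)
        have hle : lapBel g uε x₀ ≤ 0 := lap_nonpos hgpd hgsm hΩo huε2 hx₀Ω hloc
        have hlin : lapBel g uε x₀ = lapBel g u x₀ + ε * lapBel g w x₀ :=
          lapBel_add_mul hgpd hgsm hΩo hu2 (contDiff_exp_aux i0 α) ε hx₀Ω
        have hx₀cl : x₀ ∈ closure Ω := subset_closure hx₀Ω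
        have hbar : lapBel g w x₀ + cf x₀ * w x₀
            = Real.exp (α * x₀ i0) * (α^2 * (g x₀)⁻¹ i0 i0 + α * Bfun g i0 x₀ + cf x₀) := by
          rw [hw]
          rw [lapBel_barrier hgpd hgsm i0 α x₀]
          ring
        have hpos : 0 < lapBel g w x₀ + cf x₀ * w x₀ := by
          rw [hbar]
          exact mul_pos (Real.exp_pos _) (hkey x₀ hx₀cl)
        have h1 : 0 < lapBel g uε x₀ + cf x₀ * uε x₀ := by
          have h2 : lapBel g uε x₀ + cf x₀ * uε x₀
              = (lapBel g u x₀ + cf x₀ * u x₀) + ε * (lapBel g w x₀ + cf x₀ * w x₀) := by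
            rw [hlin]; simp only [huε]; ring
          rw [h2]
          have := hLu x₀ hx₀Ω
          nlinarith
        have h3 : cf x₀ * uε x₀ ≤ 0 :=
          mul_nonpos_of_nonpos_of_nonneg (hcnp x₀ hx₀cl) hval.le
        linarith
    · have hx₀f : x₀ ∈ frontier Ω := by
        rw [hΩo.frontier_eq]
        exact ⟨hx₀K, hx₀Ω⟩
      calc u x ≤ uε x := hux
        _ ≤ uε x₀ := hx₀max hx
        _ = u x₀ + ε * w x₀ := rfl
        _ ≤ 0 + ε * W := by
            have h1 := hub x₀ hx₀f
            have h2 := hwleW x₀ hx₀K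
            have := mul_le_mul_of_nonneg_left h2 hε.le
            linarith
        _ = ε * W := by ring
  intro x hx
  have hfin : ∀ ε' : ℝ, 0 < ε' → u x ≤ ε' := by
    intro ε' hε'
    have hden : 0 < W + 1 := by linarith
    have h1 := hmain (ε'/(W+1)) (by positivity) x hx
    calc u x ≤ (ε'/(W+1)) * W := h1
      _ ≤ ε' := by
        rw [div_mul_eq_mul_div, div_le_iff₀ hden]
        nlinarith
  by_contra hpos
  push_neg at hpos
  have := hfin (u x / 2) (by linarith)
  linarith

/-- For `λ ≤ 0`, `V ≥ 0` and `0 < η ≤ 1`, the solution `w̄` of the linear problem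
`Δ_g w̄ + (λ − V)w̄ = (λ − V)(max η)^{(n+2)/(n-2)}`, `w̄ = η` on `∂M`, satisfies
`0 ≤ w̄ ≤ max η` and is an upper solution of `Δ_g w + (λ − V)w − λ w^{(n+2)/(n-2)} = 0`. -/
theorem stmt19 {n : ℕ} (hn : 3 ≤ n) (lam : ℝ) (hlam : lam ≤ 0)
    (Ω : Set (Fin n → ℝ)) (hΩo : IsOpen Ω) (hΩconn : IsConnected Ω)
    (hΩb : Bornology.IsBounded Ω)
    (g : (Fin n → ℝ) → Matrix (Fin n) (Fin n) ℝ)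
    (hgpd : ∀ x, (g x).PosDef)
    (hgsm : ∀ i j, ContDiff ℝ (⊤ : ℕ∞) fun x => g x i j)
    (V : (Fin n → ℝ) → ℝ) (hVc : ContinuousOn V (closure Ω))
    (hV : ∀ x ∈ closure Ω, 0 ≤ V x)
    (η : (Fin n → ℝ) → ℝ) (hη : ContDiff ℝ (⊤ : ℕ∞) η)
    (hηpos : ∀ x ∈ frontier Ω, 0 < η x) (hη1 : ∀ x ∈ frontier Ω, η x ≤ 1)
    (Mη : ℝ) (hMη : IsGreatest (η '' frontier Ω) Mη)
    (wup : (Fin n → ℝ) → ℝ)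
    (hreg : ContDiffOn ℝ 2 wup Ω) (hcont : ContinuousOn wup (closure Ω))
    (hpde : ∀ x ∈ Ω, lapBel g wup x + (lam - V x) * wup x
      = (lam - V x) * Mη ^ (((n : ℝ) + 2) / ((n : ℝ) - 2)))
    (hbc : ∀ x ∈ frontier Ω, wup x = η x) :
    (∀ x ∈ closure Ω, 0 ≤ wup x ∧ wup x ≤ Mη) ∧
    (∀ x ∈ Ω, lapBel g wup x + (lam - V x) * wup x
        - lam * (wup x) ^ (((n : ℝ) + 2) / ((n : ℝ) - 2)) ≤ 0) := by
  have hn0 : 0 < n := by omega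
  have hgsm2 : ∀ i j, ContDiff ℝ 2 fun x => g x i j := fun i j => (hgsm i j).of_le (WithTop.coe_le_coe.2 le_top)
  set p : ℝ := ((n : ℝ) + 2) / ((n : ℝ) - 2) with hpdef
  have hn2 : (0:ℝ) < (n:ℝ) - 2 := by
    have : (3:ℝ) ≤ (n:ℝ) := by exact_mod_cast hn
    linarith
  have hp1 : 1 ≤ p := by
    rw [hpdef, le_div_iff₀ hn2]
    linarith
  have hp0 : 0 ≤ p := by linarith
  -- Mη bounds
  obtain ⟨y₀, hy₀f, hy₀⟩ := hMη.1
  have hMηpos : 0 < Mη := hy₀ ▸ hηpos y₀ hy₀f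
  have hMη1 : Mη ≤ 1 := hy₀ ▸ hη1 y₀ hy₀f
  have hMp_le : Mη ^ p ≤ Mη := by
    calc Mη ^ p ≤ Mη ^ (1:ℝ) := Real.rpow_le_rpow_of_exponent_ge hMηpos hMη1 hp1
      _ = Mη := Real.rpow_one Mη
  have hMp_pos : 0 < Mη ^ p := Real.rpow_pos_of_pos hMηpos p
  -- coefficient
  have hcc : ContinuousOn (fun x => lam - V x) (closure Ω) := continuousOn_const.sub hVc
  have hcnp : ∀ x ∈ closure Ω, lam - V x ≤ 0 := fun x hx => by
    have := hV x hx; linarith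
  -- upper bound : wup ≤ Mη
  have hupper : ∀ x ∈ closure Ω, wup x ≤ Mη := by
    have h := maxprin hn0 hgpd hgsm2 hΩo hΩb hcc hcnp
      (u := fun x => wup x - Mη) (hreg.sub contDiffOn_const)
      (hcont.sub continuousOn_const)
      (fun x hx => by
        show 0 ≤ lapBel g (fun y => wup y - Mη) x + (lam - V x) * (wup x - Mη)
        rw [lapBel_sub_const g wup Mη]
        have hpd := hpde x hx
        have hc := hcnp x (subset_closure hx)
        have : lapBel g wup x + (lam - V x) * (wup x - Mη)
            = (lam - V x) * (Mη ^ p - Mη) := by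
          rw [mul_sub]
          rw [hpdef] at hpd ⊢
          linarith
        rw [this]
        nlinarith [mul_nonneg (neg_nonneg.2 hc) (sub_nonneg.2 hMp_le)])
      (fun x hx => by
        show wup x - Mη ≤ 0
        have h1 := hbc x hx
        have h2 := hMη.2 ⟨x, hx, rfl⟩
        linarith)
    intro x hx
    have h2 : wup x - Mη ≤ 0 := h x hx
    linarith
  -- lower bound : 0 ≤ wup
  have hlower : ∀ x ∈ closure Ω, 0 ≤ wup x := by
    have h := maxprin hn0 hgpd hgsm2 hΩo hΩb hcc hcnp
      (u := fun x => -wup x) (hreg.neg) (hcont.neg)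
      (fun x hx => by
        show 0 ≤ lapBel g (fun y => -wup y) x + (lam - V x) * (-wup x)
        rw [lapBel_neg g wup x]
        have hpd := hpde x hx
        have hc := hcnp x (subset_closure hx)
        have : -lapBel g wup x + (lam - V x) * -wup x = -((lam - V x) * Mη ^ p) := by
          rw [hpdef] at hpd ⊢
          linarith
        rw [this]
        have : (lam - V x) * Mη ^ p ≤ 0 := mul_nonpos_of_nonpos_of_nonneg hc hMp_pos.le
        linarith)
      (fun x hx => by
        show -wup x ≤ 0
        have h1 := hbc x hx
        have h2 := hηpos x hx
        linarith)
    intro x hx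
    have h2 : -wup x ≤ 0 := h x hx
    linarith
  refine ⟨fun x hx => ⟨hlower x hx, hupper x hx⟩, ?_⟩
  intro x hx
  have hxcl : x ∈ closure Ω := subset_closure hx
  have hw0 := hlower x hxcl
  have hwM := hupper x hxcl
  have hpd := hpde x hx
  have hwple : (wup x) ^ p ≤ Mη ^ p := Real.rpow_le_rpow hw0 hwM hp0
  have h1 : lam * (Mη ^ p - (wup x) ^ p) ≤ 0 :=
    mul_nonpos_of_nonpos_of_nonneg hlam (by linarith)
  have h2 : 0 ≤ V x * Mη ^ p := mul_nonneg (hV x hxcl) hMp_pos.le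
  rw [hpdef] at hpd ⊢
  nlinarith [hpd, h1, h2]
end
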